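/- arXiv:0804.3051 — 2 statements merged into one kernel-verified Lean document; each statement's English description precedes it below -/
import Mathlib

section
/- Let (Ω, μ) be a measure space and 1 ≤ q ≤ p < ∞ with p > 1. If {E_i} is a countable collection of pairwise disjoint measurable subsets of Ω with E_0 = ⋃ E_i, and f ∈ L^{p,q}(Ω, μ), then ∑_{i≥1} ‖χ_{E_i} f‖_{L^{p,q}}^p ≤ ‖χ_{E_0} f‖_{L^{p,q}}^p. -/
open MeasureTheory Set
open scoped ENNReal

/-- The nonincreasing rearrangement of `f` with respect to `μ`. -/
noncomputable def rearr {α : Type*} [MeasurableSpace α] (μ : Measure α)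
    (f : α → ℝ) (t : ℝ) : ℝ≥0∞ :=
  sInf {v : ℝ≥0∞ | μ {x | v < ENNReal.ofReal |f x|} ≤ ENNReal.ofReal t}

/-- The Lorentz `p,q`-(quasi)norm, `1 ≤ q < ∞`:
`‖f‖_{L^{p,q}} = (∫_0^∞ (t^{1/p} f*(t))^q dt/t)^{1/q}`. -/
noncomputable def lorentzNorm {α : Type*} [MeasurableSpace α] (μ : Measure α)
    (p q : ℝ) (f : α → ℝ) : ℝ≥0∞ :=
  (∫⁻ t in Ioi (0 : ℝ),
      (ENNReal.ofReal (t ^ (1 / p)) * rearr μ f t) ^ q * (ENNReal.ofReal t)⁻¹) ^ (1 / q)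


open intervalIntegral

theorem distrib_indicator_set {α : Type*} (f : α → ℝ) (s : Set α) (v : ℝ≥0∞) :
    {x | v < ENNReal.ofReal |s.indicator f x|} = s ∩ {x | v < ENNReal.ofReal |f x|} := by
  ext x
  by_cases hx : x ∈ s
  · simp [indicator_of_mem hx, hx]
  · simp [indicator_of_notMem hx, hx]

noncomputable def distrib {α : Type*} [MeasurableSpace α] (μ : Measure α)
    (f : α → ℝ) (v : ℝ≥0∞) : ℝ≥0∞ := μ {x | v < ENNReal.ofReal |f x|}

theorem distrib_antitone {α : Type*} [MeasurableSpace α] (μ : Measure α) (f : α → ℝ) :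
    Antitone (distrib μ f) := fun _ _ hvw =>
  measure_mono fun _ hx => lt_of_le_of_lt hvw hx

theorem rearr_le_iff {α : Type*} [MeasurableSpace α] (μ : Measure α) (f : α → ℝ)
    (t : ℝ) (v : ℝ≥0∞) : rearr μ f t ≤ v ↔ distrib μ f v ≤ ENNReal.ofReal t := by
  constructor
  · intro h
    rcases eq_or_ne v ⊤ with rfl | hv
    · have h0 : {x | (⊤:ℝ≥0∞) < ENNReal.ofReal |f x|} = ∅ := by
        ext x; simp [not_top_lt]
      simp [distrib, h0]
    · have key : ∀ w : ℝ≥0∞, v < w → distrib μ f w ≤ ENNReal.ofReal t := by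
        intro w hw
        obtain ⟨u, hu, huw⟩ := sInf_lt_iff.mp (lt_of_le_of_lt h hw)
        exact le_trans (distrib_antitone μ f huw.le) hu
      have hset : {x | v < ENNReal.ofReal |f x|}
          = ⋃ n : ℕ, {x | v + ((n:ℝ≥0∞))⁻¹ < ENNReal.ofReal |f x|} := by
        ext x
        simp only [mem_setOf_eq, mem_iUnion]
        constructor
        · intro hx
          rcases eq_or_ne (ENNReal.ofReal |f x|) ⊤ with htop | hfin
          · exact ⟨1, by simp [htop, lt_top_iff_ne_top, ENNReal.add_ne_top, hv]⟩
          · have hpos : ENNReal.ofReal |f x| - v ≠ 0 := by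
              simpa [tsub_eq_zero_iff_le, not_le] using hx
            obtain ⟨n, hn⟩ := ENNReal.exists_inv_nat_lt hpos
            refine ⟨n, ?_⟩
            calc v + (n:ℝ≥0∞)⁻¹ < v + (ENNReal.ofReal |f x| - v) :=
                  ENNReal.add_lt_add_left hv hn
              _ = ENNReal.ofReal |f x| := add_tsub_cancel_of_le hx.le
        · rintro ⟨n, hn⟩
          exact lt_of_le_of_lt le_self_add hn
      have hmono : Monotone fun n : ℕ => {x | v + ((n:ℝ≥0∞))⁻¹ < ENNReal.ofReal |f x|} := by
        intro n m hnm x hx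
        refine lt_of_le_of_lt (add_le_add_right ?_ v) hx
        exact ENNReal.inv_le_inv.mpr (by exact_mod_cast hnm)
      have : distrib μ f v = ⨆ n : ℕ, μ {x | v + ((n:ℝ≥0∞))⁻¹ < ENNReal.ofReal |f x|} := by
        rw [distrib, hset, hmono.measure_iUnion]
      rw [this]
      refine iSup_le fun n => ?_
      rcases Nat.eq_zero_or_pos n with rfl | hn
      · have h0 : {x | v + (((0:ℕ):ℝ≥0∞))⁻¹ < ENNReal.ofReal |f x|} = ∅ := by
          ext x
          simp [not_top_lt, hv]
        simp [h0]
      · exact key _ (ENNReal.lt_add_right hv (by simpa using Nat.pos_iff.mp hn))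
  · intro h
    exact sInf_le h

theorem layer_fin (s : ℝ) (hs : 0 < s) (T : ℝ) (hT : 0 ≤ T) :
    ∫⁻ t in Ioo (0:ℝ) T, ENNReal.ofReal (s * t ^ (s-1)) = ENNReal.ofReal (T ^ s) := by
  have hint : IntervalIntegrable (fun t : ℝ => s * t ^ (s-1)) volume 0 T :=
    (intervalIntegrable_rpow' (by linarith)).const_mul s
  have hIoc : IntegrableOn (fun t : ℝ => s * t ^ (s-1)) (Ioc 0 T) volume := by
    simpa [intervalIntegrable_iff_integrableOn_Ioc_of_le hT] using hint
  have hIoo : IntegrableOn (fun t : ℝ => s * t ^ (s-1)) (Ioo 0 T) volume :=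
    hIoc.mono_set Ioo_subset_Ioc_self
  rw [← ofReal_integral_eq_lintegral_ofReal hIoo]
  · congr 1
    have h2 : ∫ t in Ioo (0:ℝ) T, s * t ^ (s-1) = ∫ t in (0:ℝ)..T, s * t ^ (s-1) := by
      rw [intervalIntegral.integral_of_le hT, ← integral_Ioc_eq_integral_Ioo]
    rw [h2, intervalIntegral.integral_const_mul, integral_rpow (Or.inl (by linarith))]
    rw [sub_add_cancel, Real.zero_rpow hs.ne']
    field_simp
    simp
  · filter_upwards [self_mem_ae_restrict measurableSet_Ioo] with t ht
    exact mul_nonneg hs.le (Real.rpow_nonneg ht.1.le _)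

theorem layer_top (s : ℝ) (hs : 0 < s) :
    ∫⁻ t in Ioi (0:ℝ), ENNReal.ofReal (s * t ^ (s-1)) = ⊤ := by
  have h1 : ∀ n : ℕ, ENNReal.ofReal ((n:ℝ)^s)
      ≤ ∫⁻ t in Ioi (0:ℝ), ENNReal.ofReal (s * t ^ (s-1)) := by
    intro n
    rw [← layer_fin s hs n (Nat.cast_nonneg n)]
    exact lintegral_mono_set (fun x hx => hx.1)
  rw [eq_top_iff]
  refine ENNReal.le_of_forall_nnreal_lt fun r _ => ?_
  obtain ⟨n, hn⟩ := exists_nat_ge ((r:ℝ) ^ (1/s))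
  refine le_trans ?_ (h1 n)
  rw [← ENNReal.ofReal_coe_nnreal]
  refine ENNReal.ofReal_le_ofReal ?_
  calc (r:ℝ) = ((r:ℝ) ^ (1/s)) ^ s := by
        rw [← Real.rpow_mul r.coe_nonneg, one_div_mul_cancel hs.ne', Real.rpow_one]
    _ ≤ (n:ℝ) ^ s := Real.rpow_le_rpow (Real.rpow_nonneg r.coe_nonneg _) hn hs.le

theorem layer (s : ℝ) (hs : 0 < s) (a : ℝ≥0∞) :
    ∫⁻ t in Ioi (0:ℝ),
      (if ENNReal.ofReal t < a then ENNReal.ofReal (s * t ^ (s-1)) else 0) = a ^ s := by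
  rcases eq_or_ne a ⊤ with rfl | ha
  · have : ∀ t : ℝ, (if ENNReal.ofReal t < (⊤:ℝ≥0∞) then ENNReal.ofReal (s * t ^ (s-1)) else 0)
        = ENNReal.ofReal (s * t ^ (s-1)) := fun t => if_pos (ENNReal.ofReal_lt_top)
    simp only [this, layer_top s hs, ENNReal.top_rpow_of_pos hs]
  · set T := a.toReal with hT
    have step1 : ∫⁻ t in Ioi (0:ℝ),
        (if ENNReal.ofReal t < a then ENNReal.ofReal (s * t ^ (s-1)) else 0)
        = ∫⁻ t in Ioi (0:ℝ), (Iio T).indicator (fun t => ENNReal.ofReal (s * t ^ (s-1))) t := by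
      refine setLIntegral_congr_fun measurableSet_Ioi (fun t ht => ?_)
      by_cases h : t < T
      · rw [if_pos ((ENNReal.ofReal_lt_iff_lt_toReal (le_of_lt ht) ha).mpr h),
          indicator_of_mem (mem_Iio.mpr h)]
      · rw [if_neg (fun hc => h ((ENNReal.ofReal_lt_iff_lt_toReal (le_of_lt ht) ha).mp hc)),
          indicator_of_notMem (by simpa using h)]
    rw [step1, lintegral_indicator measurableSet_Iio, Measure.restrict_restrict measurableSet_Iio]
    have : Iio T ∩ Ioi 0 = Ioo (0:ℝ) T := by ext x; simp [mem_Ioo, and_comm]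
    rw [this, layer_fin s hs T ENNReal.toReal_nonneg]
    rw [← ENNReal.ofReal_toReal ha, ENNReal.ofReal_rpow_of_nonneg ENNReal.toReal_nonneg hs.le]

theorem rpow_ne_top'' {a : ℝ≥0∞} (h0 : a ≠ 0) (ht : a ≠ ⊤) (y : ℝ) : a ^ y ≠ ⊤ := by
  simp [ENNReal.rpow_eq_top_iff, h0, ht]

theorem lt_rearr_iff {α : Type*} [MeasurableSpace α] (μ : Measure α) (f : α → ℝ)
    (t : ℝ) (v : ℝ≥0∞) : v < rearr μ f t ↔ ENNReal.ofReal t < distrib μ f v := by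
  rw [← not_le, ← not_le, rearr_le_iff]

theorem lorentz_repr {α : Type*} [MeasurableSpace α] (μ : Measure α) (p q : ℝ)
    (hp : 1 < p) (hq : 1 ≤ q) (g : α → ℝ) :
    ∫⁻ t in Ioi (0:ℝ), (ENNReal.ofReal (t ^ (1/p)) * rearr μ g t) ^ q * (ENNReal.ofReal t)⁻¹
      = ENNReal.ofReal p *
        ∫⁻ l in Ioi (0:ℝ), ENNReal.ofReal (l ^ (q-1)) *
          (distrib μ g (ENNReal.ofReal l)) ^ (q/p) := by
  have hq0 : (0:ℝ) < q := lt_of_lt_of_le one_pos hq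
  have hp0 : (0:ℝ) < p := lt_trans one_pos hp
  have hr0 : (0:ℝ) < q/p := div_pos hq0 hp0
  set D : ℝ → ℝ≥0∞ := fun l => distrib μ g (ENNReal.ofReal l) with hDdef
  have hD : Measurable D := by
    have : Antitone D := fun u v huv =>
      distrib_antitone μ g (ENNReal.ofReal_le_ofReal huv)
    exact this.measurable
  set Φ : ℝ → ℝ → ℝ≥0∞ := fun t l =>
    (ENNReal.ofReal t) ^ (q/p - 1) *
      (if ENNReal.ofReal t < D l then ENNReal.ofReal (q * l ^ (q-1)) else 0) with hΦ
  have step1 : ∫⁻ t in Ioi (0:ℝ),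
      (ENNReal.ofReal (t ^ (1/p)) * rearr μ g t) ^ q * (ENNReal.ofReal t)⁻¹
      = ∫⁻ t in Ioi (0:ℝ), ∫⁻ l in Ioi (0:ℝ), Φ t l := by
    refine setLIntegral_congr_fun measurableSet_Ioi (fun t ht => ?_)
    have ht0 : (0:ℝ) < t := ht
    have hne : ENNReal.ofReal t ≠ 0 := (ENNReal.ofReal_pos.mpr ht0).ne'
    have hnetop : ENNReal.ofReal t ≠ ⊤ := ENNReal.ofReal_ne_top
    have e1 : (ENNReal.ofReal (t ^ (1/p)) * rearr μ g t) ^ q * (ENNReal.ofReal t)⁻¹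
        = (ENNReal.ofReal t) ^ (q/p - 1) * (rearr μ g t) ^ q := by
      rw [← ENNReal.ofReal_rpow_of_pos ht0, ENNReal.mul_rpow_of_nonneg _ _ hq0.le,
        ← ENNReal.rpow_mul, ← ENNReal.rpow_neg_one (ENNReal.ofReal t),
        mul_comm ((ENNReal.ofReal t) ^ (1/p*q)), mul_assoc,
        ← ENNReal.rpow_add _ _ hne hnetop, mul_comm]
      congr 2
      ring
    rw [e1]
    have e2 : (rearr μ g t) ^ q
        = ∫⁻ l in Ioi (0:ℝ),
            (if ENNReal.ofReal t < D l then ENNReal.ofReal (q * l ^ (q-1)) else 0) := by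
      rw [← layer q hq0 (rearr μ g t)]
      refine setLIntegral_congr_fun measurableSet_Ioi (fun l _ => ?_)
      by_cases h : ENNReal.ofReal l < rearr μ g t
      · rw [if_pos h, if_pos ((lt_rearr_iff μ g t _).mp h)]
      · rw [if_neg h, if_neg (fun hc => h ((lt_rearr_iff μ g t _).mpr hc))]
    rw [e2, ← lintegral_const_mul' _ _ (rpow_ne_top'' hne hnetop _)]
  rw [step1]
  have hmeas : Measurable fun z : ℝ × ℝ => Φ z.1 z.2 := by
    apply Measurable.mul
    · exact (ENNReal.measurable_ofReal.comp measurable_fst).pow measurable_const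
    · refine Measurable.ite ?_ ?_ measurable_const
      · exact measurableSet_lt (ENNReal.measurable_ofReal.comp measurable_fst)
          (hD.comp measurable_snd)
      · exact ENNReal.measurable_ofReal.comp
          ((measurable_snd.pow measurable_const).const_mul q)
  have swap : ∫⁻ t in Ioi (0:ℝ), ∫⁻ l in Ioi (0:ℝ), Φ t l
      = ∫⁻ l in Ioi (0:ℝ), ∫⁻ t in Ioi (0:ℝ), Φ t l :=
    lintegral_lintegral_swap hmeas.aemeasurable
  rw [swap]
  have inner : ∀ l ∈ Ioi (0:ℝ), (∫⁻ t in Ioi (0:ℝ), Φ t l)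
      = ENNReal.ofReal p * (ENNReal.ofReal (l ^ (q-1)) * (D l) ^ (q/p)) := by
    intro l hl
    have hl0 : (0:ℝ) < l := hl
    set C : ℝ≥0∞ := ENNReal.ofReal q * ENNReal.ofReal (l ^ (q-1)) *
      (ENNReal.ofReal (q/p))⁻¹ with hC
    have hCtop : C ≠ ⊤ :=
      ENNReal.mul_ne_top (ENNReal.mul_ne_top ENNReal.ofReal_ne_top ENNReal.ofReal_ne_top)
        (ENNReal.inv_ne_top.mpr (ENNReal.ofReal_pos.mpr hr0).ne')
    have e3 : ∀ t ∈ Ioi (0:ℝ), Φ t l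
        = C * (if ENNReal.ofReal t < D l then ENNReal.ofReal ((q/p) * t ^ (q/p-1)) else 0) := by
      intro t ht
      have ht0 : (0:ℝ) < t := ht
      by_cases h : ENNReal.ofReal t < D l
      · have hc : (ENNReal.ofReal (q/p))⁻¹ * ENNReal.ofReal (q/p) = 1 :=
          ENNReal.inv_mul_cancel (ENNReal.ofReal_pos.mpr hr0).ne' ENNReal.ofReal_ne_top
        have hkey : C * (ENNReal.ofReal (q/p) * ENNReal.ofReal (t^(q/p-1)))
            = ENNReal.ofReal q * ENNReal.ofReal (l^(q-1)) * ENNReal.ofReal (t^(q/p-1)) := by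
          rw [hC, mul_assoc (ENNReal.ofReal q * ENNReal.ofReal (l ^ (q-1))),
            ← mul_assoc (ENNReal.ofReal (q/p))⁻¹, hc, one_mul]
        rw [hΦ]
        simp only [if_pos h]
        rw [ENNReal.ofReal_mul hr0.le, hkey, ENNReal.ofReal_rpow_of_pos ht0,
          ENNReal.ofReal_mul hq0.le]
        ring
      · simp [hΦ, if_neg h]
    rw [setLIntegral_congr_fun measurableSet_Ioi e3,
      lintegral_const_mul' _ _ hCtop, layer (q/p) hr0 (D l), hC]
    have hqr : ENNReal.ofReal q * (ENNReal.ofReal (q/p))⁻¹ = ENNReal.ofReal p := by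
      rw [← div_eq_mul_inv, ← ENNReal.ofReal_div_of_pos hr0]
      congr 1
      field_simp
    calc ENNReal.ofReal q * ENNReal.ofReal (l ^ (q-1)) * (ENNReal.ofReal (q/p))⁻¹ * D l ^ (q/p)
        = (ENNReal.ofReal q * (ENNReal.ofReal (q/p))⁻¹) *
            (ENNReal.ofReal (l ^ (q-1)) * D l ^ (q/p)) := by ring
      _ = ENNReal.ofReal p * (ENNReal.ofReal (l ^ (q-1)) * D l ^ (q/p)) := by rw [hqr]
  rw [setLIntegral_congr_fun measurableSet_Ioi inner,
    lintegral_const_mul' _ _ ENNReal.ofReal_ne_top]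

theorem real_pt (r : ℝ) (hr0 : 0 < r) (hr1 : r ≤ 1) (X Y S T : ℝ)
    (hX : 0 ≤ X) (hY : 0 ≤ Y) (hS : 0 < S) (hT : 0 < T) :
    X^r * S^(1-r) + Y^r * T^(1-r) ≤ (X+Y)^r * (S+T)^(1-r) := by
  rcases eq_or_lt_of_le (by linarith : (0:ℝ) ≤ X+Y) with h0 | hpos
  · have hX0 : X = 0 := by linarith
    have hY0 : Y = 0 := by linarith
    simp [hX0, hY0, Real.zero_rpow hr0.ne']
  · have hST : 0 < S + T := by linarith
    have key : ∀ a b : ℝ, 0 ≤ a → 0 ≤ b →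
        a^r * b^(1-r) ≤ ((X+Y)^r * (S+T)^(1-r)) * (r * (a/(X+Y)) + (1-r) * (b/(S+T))) := by
      intro a b ha hb
      have h1 : (a/(X+Y))^r * (b/(S+T))^(1-r)
          ≤ r * (a/(X+Y)) + (1-r) * (b/(S+T)) :=
        Real.geom_mean_le_arith_mean2_weighted hr0.le (by linarith)
          (div_nonneg ha hpos.le) (div_nonneg hb hST.le) (by ring)
      have h2 : a^r * b^(1-r)
          = ((X+Y)^r * (S+T)^(1-r)) * ((a/(X+Y))^r * (b/(S+T))^(1-r)) := by
        rw [Real.div_rpow ha hpos.le, Real.div_rpow hb hST.le]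
        field_simp
      rw [h2]
      exact mul_le_mul_of_nonneg_left h1
        (mul_nonneg (Real.rpow_nonneg hpos.le _) (Real.rpow_nonneg hST.le _))
    calc X^r * S^(1-r) + Y^r * T^(1-r)
        ≤ ((X+Y)^r * (S+T)^(1-r)) * (r * (X/(X+Y)) + (1-r) * (S/(S+T)))
          + ((X+Y)^r * (S+T)^(1-r)) * (r * (Y/(X+Y)) + (1-r) * (T/(S+T))) :=
          add_le_add (key X S hX hS.le) (key Y T hY hT.le)
      _ = ((X+Y)^r * (S+T)^(1-r)) *
            ((r * (X/(X+Y)) + r * (Y/(X+Y))) + ((1-r) * (S/(S+T)) + (1-r) * (T/(S+T)))) := by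
          ring
      _ = (X+Y)^r * (S+T)^(1-r) := by
          have e1 : r * (X/(X+Y)) + r * (Y/(X+Y)) = r := by
            field_simp
          have e2 : (1-r) * (S/(S+T)) + (1-r) * (T/(S+T)) = 1-r := by
            field_simp
          rw [e1, e2]
          simp

theorem ennreal_pt (r : ℝ) (hr0 : 0 < r) (hr1 : r ≤ 1) (x y : ℝ≥0∞) (s t : ℝ≥0∞)
    (hs0 : s ≠ 0) (hst : s ≠ ⊤) (ht0 : t ≠ 0) (htt : t ≠ ⊤) :
    x^r * s^(1-r) + y^r * t^(1-r) ≤ (x+y)^r * (s+t)^(1-r) := by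
  have hstne0 : s + t ≠ 0 := by simp [hs0]
  have hstnetop : s + t ≠ ⊤ := ENNReal.add_ne_top.mpr ⟨hst, htt⟩
  rcases eq_or_ne x ⊤ with rfl | hx
  · have : ((⊤:ℝ≥0∞) + y) ^ r * (s+t)^(1-r) = ⊤ := by
      rw [top_add, ENNReal.top_rpow_of_pos hr0, ENNReal.top_mul]
      simp [ENNReal.rpow_eq_zero_iff, hstne0, hstnetop]
    rw [this]; exact le_top
  rcases eq_or_ne y ⊤ with rfl | hy
  · have : (x + (⊤:ℝ≥0∞)) ^ r * (s+t)^(1-r) = ⊤ := by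
      rw [add_top, ENNReal.top_rpow_of_pos hr0, ENNReal.top_mul]
      simp [ENNReal.rpow_eq_zero_iff, hstne0, hstnetop]
    rw [this]; exact le_top
  · have h1r : (0:ℝ) ≤ 1 - r := by linarith
    rw [← ENNReal.ofReal_toReal hx, ← ENNReal.ofReal_toReal hy,
      ← ENNReal.ofReal_toReal hst, ← ENNReal.ofReal_toReal htt,
      ENNReal.ofReal_rpow_of_nonneg ENNReal.toReal_nonneg hr0.le,
      ENNReal.ofReal_rpow_of_nonneg ENNReal.toReal_nonneg hr0.le,
      ENNReal.ofReal_rpow_of_nonneg ENNReal.toReal_nonneg h1r,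
      ENNReal.ofReal_rpow_of_nonneg ENNReal.toReal_nonneg h1r,
      ← ENNReal.ofReal_add ENNReal.toReal_nonneg ENNReal.toReal_nonneg,
      ← ENNReal.ofReal_add ENNReal.toReal_nonneg ENNReal.toReal_nonneg,
      ENNReal.ofReal_rpow_of_nonneg (by positivity) hr0.le,
      ENNReal.ofReal_rpow_of_nonneg (by positivity) h1r,
      ← ENNReal.ofReal_mul (Real.rpow_nonneg ENNReal.toReal_nonneg _),
      ← ENNReal.ofReal_mul (Real.rpow_nonneg ENNReal.toReal_nonneg _),
      ← ENNReal.ofReal_mul (Real.rpow_nonneg (by positivity) _),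
      ← ENNReal.ofReal_add (by positivity) (by positivity)]
    refine ENNReal.ofReal_le_ofReal ?_
    exact real_pt r hr0 hr1 _ _ _ _ ENNReal.toReal_nonneg ENNReal.toReal_nonneg
      (ENNReal.toReal_pos hs0 hst) (ENNReal.toReal_pos ht0 htt)

theorem rev_mink2 {β : Type*} [MeasurableSpace β] (ν : Measure β) (r : ℝ)
    (hr0 : 0 < r) (hr1 : r ≤ 1) (g h : β → ℝ≥0∞) :
    (∫⁻ x, g x ^ r ∂ν) ^ (1/r) + (∫⁻ x, h x ^ r ∂ν) ^ (1/r)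
      ≤ (∫⁻ x, (g x + h x) ^ r ∂ν) ^ (1/r) := by
  set A := ∫⁻ x, g x ^ r ∂ν with hA
  set B := ∫⁻ x, h x ^ r ∂ν with hB
  set I := ∫⁻ x, (g x + h x) ^ r ∂ν with hI
  have hr0' : (0:ℝ) < 1/r := by positivity
  have hAI : A ≤ I := lintegral_mono fun x => ENNReal.rpow_le_rpow le_self_add hr0.le
  have hBI : B ≤ I := lintegral_mono fun x => ENNReal.rpow_le_rpow le_add_self hr0.le
  rcases eq_or_ne A ⊤ with hAtop | hAfin
  · have : I = ⊤ := eq_top_iff.mpr (hAtop ▸ hAI)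
    rw [this, ENNReal.top_rpow_of_pos hr0']
    exact le_top
  rcases eq_or_ne B ⊤ with hBtop | hBfin
  · have : I = ⊤ := eq_top_iff.mpr (hBtop ▸ hBI)
    rw [this, ENNReal.top_rpow_of_pos hr0']
    exact le_top
  rcases eq_or_ne A 0 with hA0 | hA0
  · rw [hA0, ENNReal.zero_rpow_of_pos hr0', zero_add]
    exact ENNReal.rpow_le_rpow hBI hr0'.le
  rcases eq_or_ne B 0 with hB0 | hB0
  · rw [hB0, ENNReal.zero_rpow_of_pos hr0', add_zero]
    exact ENNReal.rpow_le_rpow hAI hr0'.le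
  set s := A ^ (1/r) with hs
  set t := B ^ (1/r) with ht
  have hs0 : s ≠ 0 := by simp [hs, ENNReal.rpow_eq_zero_iff, hA0, hAfin]
  have hstop : s ≠ ⊤ := by simp [hs, ENNReal.rpow_eq_top_iff, hA0, hAfin]
  have ht0 : t ≠ 0 := by simp [ht, ENNReal.rpow_eq_zero_iff, hB0, hBfin]
  have httop : t ≠ ⊤ := by simp [ht, ENNReal.rpow_eq_top_iff, hB0, hBfin]
  have hsr : s ^ r = A := by
    rw [hs, ← ENNReal.rpow_mul, one_div_mul_cancel hr0.ne', ENNReal.rpow_one]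
  have htr : t ^ r = B := by
    rw [ht, ← ENNReal.rpow_mul, one_div_mul_cancel hr0.ne', ENNReal.rpow_one]
  have hexp : s^(1-r) ≠ ⊤ := ENNReal.rpow_ne_top_of_nonneg (by linarith) hstop
  have hexp' : t^(1-r) ≠ ⊤ := ENNReal.rpow_ne_top_of_nonneg (by linarith) httop
  have hstsum0 : s + t ≠ 0 := by simp [hs0]
  have hstsumtop : s + t ≠ ⊤ := ENNReal.add_ne_top.mpr ⟨hstop, httop⟩
  have hc0 : (s+t)^(1-r) ≠ 0 := by simp [ENNReal.rpow_eq_zero_iff, hstsum0, hstsumtop]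
  have hctop : (s+t)^(1-r) ≠ ⊤ := ENNReal.rpow_ne_top_of_nonneg (by linarith) hstsumtop
  have main : (s+t)^r * (s+t)^(1-r) ≤ I * (s+t)^(1-r) := by
    have step : A * s^(1-r) + B * t^(1-r) ≤ I * (s+t)^(1-r) := by
      calc A * s^(1-r) + B * t^(1-r)
          = (∫⁻ x, g x ^ r * s^(1-r) ∂ν) + ∫⁻ x, h x ^ r * t^(1-r) ∂ν := by
            rw [lintegral_mul_const' _ _ hexp, lintegral_mul_const' _ _ hexp']
        _ ≤ ∫⁻ x, g x ^ r * s^(1-r) + h x ^ r * t^(1-r) ∂ν := le_lintegral_add _ _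
        _ ≤ ∫⁻ x, (g x + h x) ^ r * (s+t)^(1-r) ∂ν :=
            lintegral_mono fun x => ennreal_pt r hr0 hr1 _ _ s t hs0 hstop ht0 httop
        _ = I * (s+t)^(1-r) := lintegral_mul_const' _ _ hctop
    have lhs_eq : (s+t)^r * (s+t)^(1-r) = s + t := by
      rw [← ENNReal.rpow_add _ _ hstsum0 hstsumtop]
      norm_num
    have lhs_eq2 : A * s^(1-r) + B * t^(1-r) = s + t := by
      rw [← hsr, ← htr, ← ENNReal.rpow_add _ _ hs0 hstop,
        ← ENNReal.rpow_add _ _ ht0 httop]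
      norm_num
    rw [lhs_eq]
    calc s + t = A * s^(1-r) + B * t^(1-r) := lhs_eq2.symm
      _ ≤ I * (s+t)^(1-r) := step
  have hfin : (s+t)^r ≤ I := by
    rwa [ENNReal.mul_le_mul_iff_left hc0 hctop] at main
  calc s + t = ((s+t)^r)^(1/r) := by
        rw [← ENNReal.rpow_mul, mul_one_div_cancel hr0.ne', ENNReal.rpow_one]
    _ ≤ I ^ (1/r) := ENNReal.rpow_le_rpow hfin hr0'.le

theorem rev_mink_tsum {β : Type*} [MeasurableSpace β] (ν : Measure β) (r : ℝ)
    (hr0 : 0 < r) (hr1 : r ≤ 1) (G : ℕ → β → ℝ≥0∞) :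
    ∑' i, (∫⁻ x, G i x ^ r ∂ν) ^ (1/r)
      ≤ (∫⁻ x, (∑' i, G i x) ^ r ∂ν) ^ (1/r) := by
  have hr0' : (0:ℝ) < 1/r := by positivity
  have finver : ∀ F : Finset ℕ,
      ∑ i ∈ F, (∫⁻ x, G i x ^ r ∂ν) ^ (1/r)
        ≤ (∫⁻ x, (∑ i ∈ F, G i x) ^ r ∂ν) ^ (1/r) := by
    intro F
    induction F using Finset.induction_on with
    | empty => simp
    | @insert a F haF ih =>
      rw [Finset.sum_insert haF]
      calc (∫⁻ x, G a x ^ r ∂ν) ^ (1/r) + ∑ i ∈ F, (∫⁻ x, G i x ^ r ∂ν) ^ (1/r)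
          ≤ (∫⁻ x, G a x ^ r ∂ν) ^ (1/r) + (∫⁻ x, (∑ i ∈ F, G i x) ^ r ∂ν) ^ (1/r) :=
            add_le_add_right ih _
        _ ≤ (∫⁻ x, (G a x + ∑ i ∈ F, G i x) ^ r ∂ν) ^ (1/r) :=
            rev_mink2 ν r hr0 hr1 _ _
        _ = (∫⁻ x, (∑ i ∈ insert a F, G i x) ^ r ∂ν) ^ (1/r) := by
            congr 1
            refine lintegral_congr fun x => ?_
            rw [Finset.sum_insert haF]
  rw [ENNReal.tsum_eq_iSup_sum]
  refine iSup_le fun F => ?_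
  refine le_trans (finver F) (ENNReal.rpow_le_rpow ?_ hr0'.le)
  exact lintegral_mono fun x => ENNReal.rpow_le_rpow (ENNReal.sum_le_tsum F) hr0.le

/-- Superadditivity of the `p`-th power of the Lorentz `p,q`-norm over disjoint
sets when `1 ≤ q ≤ p`, `1 < p < ∞`. -/
theorem superadditivity_lorentz_q_le_p {α : Type*} [MeasurableSpace α] (μ : Measure α)
    (p q : ℝ) (hp : 1 < p) (hq : 1 ≤ q) (hqp : q ≤ p)
    (E : ℕ → Set α) (hE : ∀ i, MeasurableSet (E i))
    (hdisj : Pairwise (Function.onFun Disjoint E))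
    (f : α → ℝ) (hf : Measurable f)
    (hfL : lorentzNorm μ p q f ≠ ⊤) :
    ∑' i, lorentzNorm μ p q ((E i).indicator f) ^ p ≤
      lorentzNorm μ p q ((⋃ i, E i).indicator f) ^ p := by
  classical
  have hq0 : (0:ℝ) < q := by linarith
  have hp0 : (0:ℝ) < p := by linarith
  set r : ℝ := q / p with hrdef
  have hr0 : 0 < r := div_pos hq0 hp0
  have hr1 : r ≤ 1 := (div_le_one hp0).mpr hqp
  have hpq0 : (0:ℝ) ≤ p / q := by positivity
  have h1r : 1/r = p/q := by rw [hrdef, one_div, inv_div]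
  set c : ℝ → ℝ≥0∞ := fun l => ENNReal.ofReal (l ^ (q-1)) ^ (p/q) with hc
  have hcr : ∀ l : ℝ, c l ^ r = ENNReal.ofReal (l ^ (q-1)) := by
    intro l
    rw [hc, ← ENNReal.rpow_mul]
    have : p / q * r = 1 := by
      rw [hrdef]; field_simp
    rw [this, ENNReal.rpow_one]
  have habs : Measurable fun x => ENNReal.ofReal |f x| :=
    ENNReal.measurable_ofReal.comp (continuous_abs.measurable.comp hf)
  have hS : ∀ v : ℝ≥0∞, MeasurableSet {x | v < ENNReal.ofReal |f x|} := fun v =>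
    habs measurableSet_Ioi
  -- additivity of the distribution function
  have hadd : ∀ v : ℝ≥0∞, distrib μ ((⋃ i, E i).indicator f) v
      = ∑' i, distrib μ ((E i).indicator f) v := by
    intro v
    simp only [distrib, distrib_indicator_set]
    rw [iUnion_inter, measure_iUnion ?_ fun i => (hE i).inter (hS v)]
    exact fun i j hij =>
      ((hdisj hij).mono inter_subset_left inter_subset_left)
  -- representation of the norm
  have norm_pow : ∀ g : α → ℝ, lorentzNorm μ p q g ^ p
      = (ENNReal.ofReal p) ^ (p/q) * (∫⁻ l in Ioi (0:ℝ),
          ENNReal.ofReal (l ^ (q-1)) * (distrib μ g (ENNReal.ofReal l)) ^ r) ^ (p/q) := by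
    intro g
    rw [lorentzNorm, lorentz_repr μ p q hp hq g, ← ENNReal.rpow_mul]
    have : 1/q * p = p/q := by field_simp
    rw [this, ENNReal.mul_rpow_of_nonneg _ _ hpq0]
  -- rewrite integrands as r-th powers
  have Ki : ∀ g : α → ℝ, ∫⁻ l in Ioi (0:ℝ),
      ENNReal.ofReal (l ^ (q-1)) * (distrib μ g (ENNReal.ofReal l)) ^ r
      = ∫⁻ l in Ioi (0:ℝ), (c l * distrib μ g (ENNReal.ofReal l)) ^ r := by
    intro g
    refine lintegral_congr fun l => ?_
    rw [ENNReal.mul_rpow_of_nonneg _ _ hr0.le, hcr l]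
  calc ∑' i, lorentzNorm μ p q ((E i).indicator f) ^ p
      = (ENNReal.ofReal p) ^ (p/q) * ∑' i, (∫⁻ l in Ioi (0:ℝ),
          (c l * distrib μ ((E i).indicator f) (ENNReal.ofReal l)) ^ r) ^ (1/r) := by
        rw [← ENNReal.tsum_mul_left]
        refine tsum_congr fun i => ?_
        rw [norm_pow, Ki, h1r]
    _ ≤ (ENNReal.ofReal p) ^ (p/q) * (∫⁻ l in Ioi (0:ℝ),
          (∑' i, c l * distrib μ ((E i).indicator f) (ENNReal.ofReal l)) ^ r) ^ (1/r) := by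
        exact mul_le_mul_right (rev_mink_tsum _ r hr0 hr1 _) _
    _ = lorentzNorm μ p q ((⋃ i, E i).indicator f) ^ p := by
        rw [norm_pow, Ki, h1r]
        congr 2
        refine lintegral_congr fun l => ?_
        rw [ENNReal.tsum_mul_left, ← hadd]
end

section
/- Let (Ω, μ) be a measure space and 1 < p < ∞, q = ∞. If {E_i} is a countable collection of pairwise disjoint measurable subsets of Ω with E_0 = ⋃ E_i, and f ∈ L^{p,∞}(Ω, μ), then ‖χ_{E_0} f‖_{L^{p,∞}}^p ≤ ∑_{i≥1} ‖χ_{E_i} f‖_{L^{p,∞}}^p. -/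
open MeasureTheory Set
open scoped ENNReal

/-- The weak-`L^p` quasinorm: `‖f‖_{L^{p,∞}} = sup_{s>0} s · μ({|f| > s})^{1/p}`. -/
noncomputable def weakLpNorm {α : Type*} [MeasurableSpace α] (μ : Measure α)
    (p : ℝ) (f : α → ℝ) : ℝ≥0∞ :=
  ⨆ s : Ioi (0 : ℝ), ENNReal.ofReal s.1 * (μ {x | s.1 < |f x|}) ^ (1 / p)

/-- Subadditivity of the `p`-th power of the weak-`L^p` quasinorm over disjoint sets,
`1 < p < ∞`, `q = ∞`. -/
theorem subadditivity_weakLp {α : Type*} [MeasurableSpace α] (μ : Measure α)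
    (p : ℝ) (hp : 1 < p)
    (E : ℕ → Set α) (hE : ∀ i, MeasurableSet (E i))
    (hdisj : Pairwise (Function.onFun Disjoint E))
    (f : α → ℝ) (hf : Measurable f)
    (hfL : weakLpNorm μ p f ≠ ⊤) :
    weakLpNorm μ p ((⋃ i, E i).indicator f) ^ p ≤
      ∑' i, weakLpNorm μ p ((E i).indicator f) ^ p := by
  have hp0 : (0 : ℝ) < p := lt_trans one_pos hp
  set S := ∑' i, weakLpNorm μ p ((E i).indicator f) ^ p with hS
  have key : weakLpNorm μ p ((⋃ i, E i).indicator f) ≤ S ^ (1 / p) := by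
    apply iSup_le
    rintro ⟨s, hs⟩
    simp only [mem_Ioi] at hs
    set g : ℕ → Set α := fun i => {x | s < |(E i).indicator f x|} with hg
    have hsub : ∀ i, g i ⊆ E i := by
      intro i x hx
      by_contra hxE
      simp only [hg, mem_setOf_eq, indicator_of_notMem hxE, abs_zero] at hx
      exact absurd hx (not_lt.2 hs.le)
    have hmeas : ∀ i, MeasurableSet (g i) :=
      fun i => measurableSet_lt measurable_const ((hf.indicator (hE i)).abs)
    have hdisj' : Pairwise (Function.onFun Disjoint g) :=
      fun i j hij => ((hdisj hij).mono (hsub i) (hsub j))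
    have hset : {x | s < |(⋃ i, E i).indicator f x|} = ⋃ i, g i := by
      ext x
      simp only [mem_setOf_eq, mem_iUnion, hg]
      constructor
      · intro hx
        have hxU : x ∈ ⋃ i, E i := by
          by_contra hxU
          simp [indicator_of_notMem hxU] at hx
          exact absurd hx (not_lt.2 hs.le)
        obtain ⟨i, hi⟩ := mem_iUnion.1 hxU
        refine ⟨i, ?_⟩
        rwa [indicator_of_mem hi, ← indicator_of_mem hxU f]
      · rintro ⟨i, hi⟩
        have hxE : x ∈ E i := hsub i hi
        have hxU : x ∈ ⋃ i, E i := mem_iUnion.2 ⟨i, hxE⟩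
        rw [indicator_of_mem hxE] at hi
        rwa [indicator_of_mem hxU]
    have hmu : μ {x | s < |(⋃ i, E i).indicator f x|} = ∑' i, μ (g i) := by
      rw [hset, measure_iUnion hdisj' hmeas]
    have hterm : ∀ i, ENNReal.ofReal s ^ p * μ (g i) ≤
        weakLpNorm μ p ((E i).indicator f) ^ p := by
      intro i
      have hle : ENNReal.ofReal s * (μ (g i)) ^ (1 / p) ≤
          weakLpNorm μ p ((E i).indicator f) :=
        le_iSup (fun t : Ioi (0:ℝ) => ENNReal.ofReal t.1 *
          (μ {x | t.1 < |(E i).indicator f x|}) ^ (1 / p)) ⟨s, hs⟩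
      calc ENNReal.ofReal s ^ p * μ (g i)
          = (ENNReal.ofReal s * (μ (g i)) ^ (1 / p)) ^ p := by
            rw [ENNReal.mul_rpow_of_nonneg _ _ hp0.le, ← ENNReal.rpow_mul,
              one_div, inv_mul_cancel₀ hp0.ne', ENNReal.rpow_one]
        _ ≤ weakLpNorm μ p ((E i).indicator f) ^ p :=
            ENNReal.rpow_le_rpow hle hp0.le
    have hsum : ENNReal.ofReal s ^ p * μ {x | s < |(⋃ i, E i).indicator f x|} ≤ S := by
      rw [hmu, ENNReal.tsum_mul_left.symm]
      exact ENNReal.tsum_le_tsum hterm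
    calc ENNReal.ofReal s * (μ {x | s < |(⋃ i, E i).indicator f x|}) ^ (1 / p)
        = (ENNReal.ofReal s ^ p * μ {x | s < |(⋃ i, E i).indicator f x|}) ^ (1 / p) := by
          rw [ENNReal.mul_rpow_of_nonneg _ _ (by positivity : (0:ℝ) ≤ 1 / p),
            ← ENNReal.rpow_mul, mul_one_div, div_self hp0.ne', ENNReal.rpow_one]
      _ ≤ S ^ (1 / p) := ENNReal.rpow_le_rpow hsum (by positivity)
  calc weakLpNorm μ p ((⋃ i, E i).indicator f) ^ p
      ≤ (S ^ (1 / p)) ^ p := ENNReal.rpow_le_rpow key hp0.le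
    _ = S := by
        rw [← ENNReal.rpow_mul, one_div, inv_mul_cancel₀ hp0.ne', ENNReal.rpow_one]
end
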